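/- arXiv:1702.05342 — 4 statements merged into one kernel-verified Lean document; each statement's English description precedes it below -/
import Mathlib

section
/- For every set A, the countable words over A satisfy the word-algebra axioms up to isomorphism: the nonempty countable words over A, equipped with concatenation, ω-power, ω*-power and η-shuffle, satisfy axioms (A1)–(A4) of a ⊕-algebra (with equality of words meaning isomorphism), and the countable words over A, additionally equipped with the empty word ε as distinguished element, also satisfy axiom (A5); that is, (A^⊕, ·, ω, ω*, η) is a ⊕-algebra and (A^◦, ε, ·, ω, ω*, η) is a ◦-algebra. -/
/-!
Every identity is witnessed by an order isomorphism between lexicographic sums. After flattening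
nested products (`∏ᵢ ∏ⱼ ≅ ∏₍ᵢ,ⱼ₎`), (A1)–(A3) become reindexings along explicit order
isomorphisms: associativity of `⊕ₗ`, `ℕ ×ₗ Fin (k+1) ≃o ℕ` (and its dual), and splitting off the
first factor of an ω-product. (A5) holds because `ε` has no positions.

For (A4), an η-shuffle `s` of `P` is `∏_{q ∈ ℚ} f q` where every letter of `P` is dense in `f`.
After flattening, each word that (A4) identifies with `s` is again a product `∏_{x ∈ γ} c x` over
a countable order in which every letter of `P` occurs between any two positions and beyond every
position. A coloured version of Cantor's back-and-forth argument shows that any two such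
colourings are isomorphic.
-/

/-- A countable word over the alphabet `A`: a countable linearly ordered domain
together with a labelling of its positions by letters of `A`.
Words are compared up to isomorphism via `CWord.Iso`. -/
structure CWord (A : Type) : Type 1 where
  carrier : Type
  ord : LinearOrder carrier
  cnt : Countable carrier
  label : carrier → A

attribute [instance] CWord.ord CWord.cnt

namespace CWord

variable {A : Type}

/-- Isomorphism of words: an order-preserving bijection of the domains
commuting with the labellings. -/
def Iso (u v : CWord A) : Prop :=
  ∃ e : u.carrier ≃o v.carrier, ∀ x, v.label (e x) = u.label x

/-- The word with domain `ι` and labelling `f`. -/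
def ofFun {ι : Type} [LinearOrder ι] [Countable ι] (f : ι → A) : CWord A :=
  ⟨ι, inferInstance, inferInstance, f⟩

/-- The one-letter word. -/
def single (a : A) : CWord A := ofFun (fun _ : Fin 1 => a)

/-- The empty word `ε`. -/
def epsilon : CWord A := ofFun (fun x : Fin 0 => (x.elim0 : A))

/-- The generalized product `∏_{i ∈ ι} u i`: the word whose domain is the
lexicographic sum of the domains of the `u i`, with the inherited labels. -/
def prod {ι : Type} [LinearOrder ι] [Countable ι] (u : ι → CWord A) : CWord A :=
  ⟨Lex ((i : ι) × (u i).carrier), inferInstance,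
    inferInstanceAs (Countable ((i : ι) × (u i).carrier)),
    fun x => (u (ofLex x).1).label (ofLex x).2⟩

/-- Concatenation of two words. -/
def concat (u v : CWord A) : CWord A := prod (fun b : Bool => cond b v u)

/-- The ω-power of a word. -/
def omegaPow (u : CWord A) : CWord A := prod (fun _ : ℕ => u)

instance : Countable ℕᵒᵈ := inferInstanceAs (Countable ℕ)

/-- The ω*-power of a word. -/
def omegaStarPow (u : CWord A) : CWord A := prod (fun _ : ℕᵒᵈ => u)

/-- The `(n+1)`-st power of a word. -/
def nPowSucc (u : CWord A) (n : ℕ) : CWord A := prod (fun _ : Fin (n + 1) => u)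

/-- `w` is an η-shuffle of the set of letters `P`: its domain has order
type η and every letter of `P` (and no other letter) occurs on a dense
set of positions. -/
def IsEtaWord {S : Type} (P : Set S) (w : CWord S) : Prop :=
  Nonempty w.carrier ∧ DenselyOrdered w.carrier ∧ NoMinOrder w.carrier ∧
    NoMaxOrder w.carrier ∧ (∀ x, w.label x ∈ P) ∧
    ∀ a ∈ P, ∀ x y : w.carrier, x < y → ∃ z, x < z ∧ z < y ∧ w.label z = a

/-- `π` is a generalized product on the nonempty countable words over `S`,
i.e. `(S, π)` is a ⊕-semigroup: `π` is isomorphism-invariant, maps a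
one-letter word to its letter and satisfies generalized associativity.
(`π` is modelled as a total function; only its values on nonempty words
are relevant.) -/
def IsPlusProd {S : Type} (π : CWord S → S) : Prop :=
  (∀ u v : CWord S, Nonempty u.carrier → Iso u v → π u = π v) ∧
  (∀ a : S, π (single a) = a) ∧
  ∀ (ι : Type) [LinearOrder ι] [Countable ι] [Nonempty ι] (u : ι → CWord S),
    (∀ i, Nonempty (u i).carrier) → π (ofFun fun i => π (u i)) = π (prod u)

/-- `π` is a generalized product on all countable words over `M`,
i.e. `(M, π)` is a ◦-monoid. -/
def IsOProd {M : Type} (π : CWord M → M) : Prop :=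
  (∀ u v : CWord M, Iso u v → π u = π v) ∧
  (∀ a : M, π (single a) = a) ∧
  ∀ (ι : Type) [LinearOrder ι] [Countable ι] (u : ι → CWord M),
    π (ofFun fun i => π (u i)) = π (prod u)

end CWord
/-- `w` is an η-shuffle of the set of words `P`: `w` is isomorphic to
`∏_{q ∈ ℚ} f q` for some choice function `f : ℚ → P` all of whose fibers over
`P` are dense in `ℚ`. -/
def IsShuffleOfWords {A : Type} (P : Set (CWord A)) (w : CWord A) : Prop :=
  ∃ f : ℚ → CWord A, (∀ q, f q ∈ P) ∧
    (∀ u ∈ P, ∀ q r : ℚ, q < r → ∃ s : ℚ, q < s ∧ s < r ∧ f s = u) ∧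
    CWord.Iso w (CWord.prod f)

section Coloring

variable {S γ γ₁ γ₂ : Type*}

theorem range_sumElim_comp_ofLex (c₁ : γ₁ → S) (c₂ : γ₂ → S) :
    Set.range (Sum.elim c₁ c₂ ∘ ofLex) = Set.range c₁ ∪ Set.range c₂ := by
  rw [ofLex.surjective.range_comp, Set.Sum.elim_range]

theorem range_sigmaUncurry_comp_ofLex {ι : Type*} {κ : ι → Type*} (c : ∀ i, κ i → S) :
    Set.range (Sigma.uncurry c ∘ ofLex) = ⋃ i, Set.range (c i) := by
  rw [ofLex.surjective.range_comp, Set.range_sigma_eq_iUnion_range]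
  rfl

theorem subset_range_sumLex_left {P : Set S} {c₁ : γ₁ → S} (c₂ : γ₂ → S)
    (h : P ⊆ Set.range c₁) : P ⊆ Set.range (Sum.elim c₁ c₂ ∘ ofLex) :=
  range_sumElim_comp_ofLex c₁ c₂ ▸ h.trans Set.subset_union_left

theorem subset_range_sumLex_right {P : Set S} (c₁ : γ₁ → S) {c₂ : γ₂ → S}
    (h : P ⊆ Set.range c₂) : P ⊆ Set.range (Sum.elim c₁ c₂ ∘ ofLex) :=
  range_sumElim_comp_ofLex c₁ c₂ ▸ h.trans Set.subset_union_right

variable [LinearOrder γ] [LinearOrder γ₁] [LinearOrder γ₂]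

def OccursBetween (P : Set S) (c : γ → S) : Prop :=
  ∀ p ∈ P, ∀ x y, x < y → ∃ z, x < z ∧ z < y ∧ c z = p

def OccursAbove (P : Set S) (c : γ → S) : Prop :=
  ∀ p ∈ P, ∀ x, ∃ z, x < z ∧ c z = p

def OccursBelow (P : Set S) (c : γ → S) : Prop :=
  ∀ p ∈ P, ∀ x, ∃ z, z < x ∧ c z = p

structure IsDenseColoring (P : Set S) (c : γ → S) : Prop where
  range_subset : Set.range c ⊆ P
  between : OccursBetween P c

/-- Abstracts the colouring `q ↦ f q` of the factors of an η-shuffle `∏_{q ∈ ℚ} f q` of `P`. -/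
structure IsShuffleColoring (P : Set S) (c : γ → S) : Prop extends IsDenseColoring P c where
  subset_range : P ⊆ Set.range c
  above : OccursAbove P c
  below : OccursBelow P c

variable {P : Set S}

theorem IsShuffleColoring.exists_between_finsets {c : γ → S} (h : IsShuffleColoring P c)
    {p : S} (hp : p ∈ P) (lo hi : Finset γ) (hlt : ∀ x ∈ lo, ∀ y ∈ hi, x < y) :
    ∃ m, c m = p ∧ (∀ x ∈ lo, x < m) ∧ ∀ y ∈ hi, m < y := by
  rcases lo.eq_empty_or_nonempty with rfl | hlo <;>
    rcases hi.eq_empty_or_nonempty with rfl | hhi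
  · obtain ⟨m, hm⟩ := h.subset_range hp
    exact ⟨m, hm, by simp, by simp⟩
  · obtain ⟨m, hm, hcm⟩ := h.below p hp (hi.min' hhi)
    exact ⟨m, hcm, by simp, fun y hy => hm.trans_le (hi.min'_le y hy)⟩
  · obtain ⟨m, hm, hcm⟩ := h.above p hp (lo.max' hlo)
    exact ⟨m, hcm, fun x hx => (lo.le_max' x hx).trans_lt hm, by simp⟩
  · obtain ⟨m, hlo', hhi', hcm⟩ :=
      h.between p hp _ _ (hlt _ (lo.max'_mem hlo) _ (hi.min'_mem hhi))
    exact ⟨m, hcm, fun x hx => (lo.le_max' x hx).trans_lt hlo',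
      fun y hy => hhi'.trans_le (hi.min'_le y hy)⟩

def ColoredPartialIso (c₁ : γ₁ → S) (c₂ : γ₂ → S) : Type _ :=
  {f : Order.PartialIso γ₁ γ₂ // ∀ p ∈ f.val, c₂ p.2 = c₁ p.1}

namespace ColoredPartialIso

variable {c₁ : γ₁ → S} {c₂ : γ₂ → S}

noncomputable instance : Preorder (ColoredPartialIso c₁ c₂) := Subtype.preorder _

instance : Inhabited (ColoredPartialIso c₁ c₂) :=
  ⟨⟨default, fun _ h => absurd h (Finset.notMem_empty _)⟩⟩

protected def comm (f : ColoredPartialIso c₁ c₂) : ColoredPartialIso c₂ c₁ :=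
  ⟨f.val.comm, by
    simp only [Order.PartialIso.comm, Subtype.map, Finset.mem_image]
    rintro _ ⟨p, hp, rfl⟩
    exact (f.prop p hp).symm⟩

theorem exists_across (h₂ : IsShuffleColoring P c₂) (hc₁ : Set.range c₁ ⊆ P)
    (f : ColoredPartialIso c₁ c₂) (a : γ₁) :
    ∃ b, c₂ b = c₁ a ∧ ∀ p ∈ f.val.val, cmp p.1 a = cmp p.2 b := by
  by_cases h : ∃ b, (a, b) ∈ f.val.val
  · obtain ⟨b, hb⟩ := h
    exact ⟨b, f.prop _ hb, fun p hp => f.val.prop _ hp _ hb⟩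
  have hlt : ∀ x ∈ {p ∈ f.val.val | p.1 < a}.image Prod.snd,
      ∀ y ∈ {p ∈ f.val.val | a < p.1}.image Prod.snd, x < y := by
    simp only [Finset.mem_image, Finset.mem_filter]
    rintro _ ⟨p, ⟨hp, hpa⟩, rfl⟩ _ ⟨q, ⟨hq, haq⟩, rfl⟩
    rw [← lt_iff_lt_of_cmp_eq_cmp (f.val.prop _ hp _ hq)]
    exact hpa.trans haq
  obtain ⟨b, hbc, hlo, hhi⟩ := h₂.exists_between_finsets (hc₁ ⟨a, rfl⟩) _ _ hlt
  refine ⟨b, hbc, fun ⟨p₁, p₂⟩ hp => ?_⟩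
  rcases lt_or_gt_of_ne (fun he : p₁ = a => h ⟨p₂, he ▸ hp⟩) with hpa | hap
  · have hpb := hlo _ (Finset.mem_image_of_mem Prod.snd (Finset.mem_filter.2 ⟨hp, hpa⟩))
    rw [(cmp_eq_lt_iff _ _).2 hpa, (cmp_eq_lt_iff _ _).2 hpb]
  · have hbp := hhi _ (Finset.mem_image_of_mem Prod.snd (Finset.mem_filter.2 ⟨hp, hap⟩))
    rw [(cmp_eq_gt_iff _ _).2 hap, (cmp_eq_gt_iff _ _).2 hbp]

def definedAtLeft (h₂ : IsShuffleColoring P c₂) (hc₁ : Set.range c₁ ⊆ P) (a : γ₁) :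
    Order.Cofinal (ColoredPartialIso c₁ c₂) where
  carrier := {f | ∃ b, (a, b) ∈ f.val.val}
  isCofinal f := by
    obtain ⟨b, hbc, hab⟩ := exists_across h₂ hc₁ f a
    refine ⟨⟨⟨insert (a, b) f.val.val, fun p hp q hq => ?_⟩, fun p hp => ?_⟩,
      ⟨b, Finset.mem_insert_self _ _⟩, Finset.subset_insert _ _⟩
    · rw [Finset.mem_insert] at hp hq
      rcases hp with rfl | hp <;> rcases hq with rfl | hq
      · simp only [cmp_self_eq_eq]
      · rw [cmp_eq_cmp_symm]
        exact hab _ hq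
      · exact hab _ hp
      · exact f.val.prop _ hp _ hq
    · rcases Finset.mem_insert.1 hp with rfl | hp
      · exact hbc
      · exact f.prop _ hp

def definedAtRight (h₁ : IsShuffleColoring P c₁) (hc₂ : Set.range c₂ ⊆ P) (b : γ₂) :
    Order.Cofinal (ColoredPartialIso c₁ c₂) where
  carrier := {f | ∃ a, (a, b) ∈ f.val.val}
  isCofinal f := by
    obtain ⟨f', ⟨a, ha⟩, hle⟩ := (definedAtLeft h₁ hc₂ b).isCofinal f.comm
    refine ⟨f'.comm, ⟨a, ?_⟩, fun p hp => ?_⟩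
    · exact Finset.mem_image_of_mem (Equiv.prodComm _ _) ha
    · exact Finset.mem_image.2 ⟨p.swap, hle (Finset.mem_image_of_mem _ hp), rfl⟩

end ColoredPartialIso

open ColoredPartialIso in
theorem IsShuffleColoring.exists_orderIso [Countable γ₁] [Countable γ₂] {c₁ : γ₁ → S}
    {c₂ : γ₂ → S} (h₁ : IsShuffleColoring P c₁) (h₂ : IsShuffleColoring P c₂) :
    ∃ e : γ₁ ≃o γ₂, ∀ x, c₂ (e x) = c₁ x := by
  cases nonempty_encodable γ₁
  cases nonempty_encodable γ₂
  let cofinal : γ₁ ⊕ γ₂ → Order.Cofinal (ColoredPartialIso c₁ c₂) :=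
    Sum.elim (definedAtLeft h₂ h₁.range_subset) (definedAtRight h₁ h₂.range_subset)
  let I := Order.idealOfCofinals default cofinal
  have forth : ∀ a, ∃ b, ∃ f ∈ I, (a, b) ∈ f.val.val := fun a => by
    obtain ⟨f, ⟨b, hb⟩, hf⟩ := Order.cofinal_meets_idealOfCofinals default cofinal (.inl a)
    exact ⟨b, f, hf, hb⟩
  have back : ∀ b, ∃ a, ∃ f ∈ I, (a, b) ∈ f.val.val := fun b => by
    obtain ⟨f, ⟨a, ha⟩, hf⟩ := Order.cofinal_meets_idealOfCofinals default cofinal (.inr b)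
    exact ⟨a, f, hf, ha⟩
  choose F hF using forth
  choose G hG using back
  refine ⟨OrderIso.ofCmpEqCmp F G fun a b => ?_, fun a => ?_⟩
  · obtain ⟨f, hf, ha⟩ := hF a
    obtain ⟨g, hg, hb⟩ := hG b
    obtain ⟨m, -, hfm, hgm⟩ := I.directed _ hf _ hg
    exact m.val.prop _ (hfm ha) _ (hgm hb)
  · obtain ⟨f, -, ha⟩ := hF a
    exact f.prop _ ha

section SumLex

variable {c₁ : γ₁ → S} {c₂ : γ₂ → S}

theorem OccursBetween.of_subsingleton [Subsingleton γ] (c : γ → S) : OccursBetween P c :=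
  fun _ _ x y hxy => absurd hxy (Subsingleton.elim x y ▸ lt_irrefl x)

theorem OccursBetween.sumLex (h₁ : OccursBetween P c₁) (h₂ : OccursBetween P c₂)
    (h : OccursAbove P c₁ ∨ OccursBelow P c₂) : OccursBetween P (Sum.elim c₁ c₂ ∘ ofLex) := by
  rintro p hp (x | x) (y | y) hxy
  · obtain ⟨z, hxz, hzy, hz⟩ := h₁ p hp x y (Sum.Lex.inl_lt_inl_iff.1 hxy)
    exact ⟨toLex (.inl z), Sum.Lex.inl_lt_inl_iff.2 hxz, Sum.Lex.inl_lt_inl_iff.2 hzy, hz⟩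
  · rcases h with h | h
    · obtain ⟨z, hxz, hz⟩ := h p hp x
      exact ⟨toLex (.inl z), Sum.Lex.inl_lt_inl_iff.2 hxz, Sum.Lex.inl_lt_inr _ _, hz⟩
    · obtain ⟨z, hzy, hz⟩ := h p hp y
      exact ⟨toLex (.inr z), Sum.Lex.inl_lt_inr _ _, Sum.Lex.inr_lt_inr_iff.2 hzy, hz⟩
  · exact absurd hxy Sum.Lex.not_inr_lt_inl
  · obtain ⟨z, hxz, hzy, hz⟩ := h₂ p hp x y (Sum.Lex.inr_lt_inr_iff.1 hxy)
    exact ⟨toLex (.inr z), Sum.Lex.inr_lt_inr_iff.2 hxz, Sum.Lex.inr_lt_inr_iff.2 hzy, hz⟩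

theorem OccursAbove.sumLex (h₂ : OccursAbove P c₂) (h : OccursAbove P c₁ ∨ P ⊆ Set.range c₂) :
    OccursAbove P (Sum.elim c₁ c₂ ∘ ofLex) := by
  rintro p hp (x | x)
  · rcases h with h | h
    · obtain ⟨z, hxz, hz⟩ := h p hp x
      exact ⟨toLex (.inl z), Sum.Lex.inl_lt_inl_iff.2 hxz, hz⟩
    · obtain ⟨z, hz⟩ := h hp
      exact ⟨toLex (.inr z), Sum.Lex.inl_lt_inr _ _, hz⟩
  · obtain ⟨z, hxz, hz⟩ := h₂ p hp x
    exact ⟨toLex (.inr z), Sum.Lex.inr_lt_inr_iff.2 hxz, hz⟩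

theorem OccursBelow.sumLex (h₁ : OccursBelow P c₁) (h : OccursBelow P c₂ ∨ P ⊆ Set.range c₁) :
    OccursBelow P (Sum.elim c₁ c₂ ∘ ofLex) := by
  rintro p hp (x | x)
  · obtain ⟨z, hzx, hz⟩ := h₁ p hp x
    exact ⟨toLex (.inl z), Sum.Lex.inl_lt_inl_iff.2 hzx, hz⟩
  · rcases h with h | h
    · obtain ⟨z, hzx, hz⟩ := h p hp x
      exact ⟨toLex (.inr z), Sum.Lex.inr_lt_inr_iff.2 hzx, hz⟩
    · obtain ⟨z, hz⟩ := h hp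
      exact ⟨toLex (.inl z), Sum.Lex.inl_lt_inr _ _, hz⟩

theorem IsDenseColoring.of_isEmpty [IsEmpty γ] (c : γ → S) : IsDenseColoring P c :=
  ⟨by simp [Set.range_eq_empty], fun _ _ x => isEmptyElim x⟩

theorem IsDenseColoring.const {a : S} (ha : a ∈ P) : IsDenseColoring P fun _ : PUnit => a :=
  ⟨by simpa using ha, .of_subsingleton _⟩

theorem IsDenseColoring.sumLex (h₁ : IsDenseColoring P c₁) (h₂ : IsDenseColoring P c₂)
    (h : OccursAbove P c₁ ∨ OccursBelow P c₂) : IsDenseColoring P (Sum.elim c₁ c₂ ∘ ofLex) :=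
  ⟨range_sumElim_comp_ofLex c₁ c₂ ▸ Set.union_subset h₁.range_subset h₂.range_subset,
    h₁.between.sumLex h₂.between h⟩

theorem IsShuffleColoring.sumLex (h₁ : IsShuffleColoring P c₁) (h₂ : IsShuffleColoring P c₂) :
    IsShuffleColoring P (Sum.elim c₁ c₂ ∘ ofLex) where
  toIsDenseColoring := h₁.toIsDenseColoring.sumLex h₂.toIsDenseColoring (.inl h₁.above)
  subset_range := subset_range_sumLex_left _ h₁.subset_range
  above := h₂.above.sumLex (.inl h₁.above)
  below := h₁.below.sumLex (.inl h₂.below)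

end SumLex

section ConsSnoc

variable {c : γ → S} (h : IsShuffleColoring P c) {a : S}
include h

theorem IsShuffleColoring.isDenseColoring_cons (ha : a ∈ P) :
    IsDenseColoring P (Sum.elim (fun _ : PUnit => a) c ∘ ofLex) :=
  (IsDenseColoring.const ha).sumLex h.toIsDenseColoring (.inr h.below)

theorem IsShuffleColoring.occursAbove_cons :
    OccursAbove P (Sum.elim (fun _ : PUnit => a) c ∘ ofLex) :=
  h.above.sumLex (.inr h.subset_range)

theorem IsShuffleColoring.isDenseColoring_snoc (ha : a ∈ P) :
    IsDenseColoring P (Sum.elim c (fun _ : PUnit => a) ∘ ofLex) :=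
  h.toIsDenseColoring.sumLex (.const ha) (.inl h.above)

theorem IsShuffleColoring.occursBelow_snoc :
    OccursBelow P (Sum.elim c (fun _ : PUnit => a) ∘ ofLex) :=
  h.below.sumLex (.inr h.subset_range)

end ConsSnoc

section SigmaLex

variable {ι : Type*} [LinearOrder ι] {κ : ι → Type*} [∀ i, LinearOrder (κ i)] {c : ∀ i, κ i → S}

theorem IsDenseColoring.sigmaLex (hblock : ∀ i, IsDenseColoring P (c i))
    (hcross : ∀ p ∈ P, ∀ i j, i < j → ∀ x y, (∃ z, x < z ∧ c i z = p) ∨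
      (∃ z, z < y ∧ c j z = p) ∨ ∃ k, i < k ∧ k < j ∧ p ∈ Set.range (c k)) :
    IsDenseColoring P (Sigma.uncurry c ∘ ofLex) := by
  refine ⟨range_sigmaUncurry_comp_ofLex c ▸ Set.iUnion_subset fun i => (hblock i).range_subset,
    ?_⟩
  rintro p hp ⟨i, x⟩ ⟨j, y⟩ hxy
  rcases hxy with ⟨_, _, hij⟩ | ⟨_, _, hxy⟩
  · rcases hcross p hp i j hij x y with ⟨z, hxz, hz⟩ | ⟨z, hzy, hz⟩ | ⟨k, hik, hkj, z, hz⟩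
    · exact ⟨toLex ⟨i, z⟩, Sigma.Lex.right _ _ hxz, Sigma.Lex.left _ _ hij, hz⟩
    · exact ⟨toLex ⟨j, z⟩, Sigma.Lex.left _ _ hij, Sigma.Lex.right _ _ hzy, hz⟩
    · exact ⟨toLex ⟨k, z⟩, Sigma.Lex.left _ _ hik, Sigma.Lex.left _ _ hkj, hz⟩
  · obtain ⟨z, hxz, hzy, hz⟩ := (hblock i).between p hp _ _ hxy
    exact ⟨toLex ⟨i, z⟩, Sigma.Lex.right _ _ hxz, Sigma.Lex.right _ _ hzy, hz⟩

theorem OccursAbove.sigmaLex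
    (h : ∀ p ∈ P, ∀ i x, (∃ z, x < z ∧ c i z = p) ∨ ∃ j, i < j ∧ p ∈ Set.range (c j)) :
    OccursAbove P (Sigma.uncurry c ∘ ofLex) := by
  rintro p hp ⟨i, x⟩
  rcases h p hp i x with ⟨z, hxz, hz⟩ | ⟨j, hij, z, hz⟩
  · exact ⟨toLex ⟨i, z⟩, Sigma.Lex.right _ _ hxz, hz⟩
  · exact ⟨toLex ⟨j, z⟩, Sigma.Lex.left _ _ hij, hz⟩

theorem OccursBelow.sigmaLex
    (h : ∀ p ∈ P, ∀ i x, (∃ z, z < x ∧ c i z = p) ∨ ∃ j, j < i ∧ p ∈ Set.range (c j)) :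
    OccursBelow P (Sigma.uncurry c ∘ ofLex) := by
  rintro p hp ⟨i, x⟩
  rcases h p hp i x with ⟨z, hzx, hz⟩ | ⟨j, hji, z, hz⟩
  · exact ⟨toLex ⟨i, z⟩, Sigma.Lex.right _ _ hzx, hz⟩
  · exact ⟨toLex ⟨j, z⟩, Sigma.Lex.left _ _ hji, hz⟩

theorem IsShuffleColoring.sigmaLex [NoMaxOrder ι] [NoMinOrder ι] [Nonempty ι]
    (hblock : ∀ i, IsDenseColoring P (c i))
    (hocc : ∀ p ∈ P, ∀ i j, i < j → ∃ k, i < k ∧ k < j ∧ p ∈ Set.range (c k)) :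
    IsShuffleColoring P (Sigma.uncurry c ∘ ofLex) where
  toIsDenseColoring := .sigmaLex hblock fun p hp i j hij _ _ => .inr (.inr (hocc p hp i j hij))
  subset_range p hp := by
    obtain ⟨i⟩ := ‹Nonempty ι›
    obtain ⟨j, hij⟩ := exists_gt i
    obtain ⟨k, -, -, z, hz⟩ := hocc p hp i j hij
    exact ⟨toLex ⟨k, z⟩, hz⟩
  above := .sigmaLex fun p hp i _ => by
    obtain ⟨j, hij⟩ := exists_gt i
    obtain ⟨k, hik, -, hk⟩ := hocc p hp i j hij
    exact .inr ⟨k, hik, hk⟩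
  below := .sigmaLex fun p hp i _ => by
    obtain ⟨j, hji⟩ := exists_lt i
    obtain ⟨k, -, hki, hk⟩ := hocc p hp j i hji
    exact .inr ⟨k, hki, hk⟩

theorem IsShuffleColoring.sigmaLex_const {κ : Type*} [LinearOrder κ] [Nonempty ι] {d : κ → S}
    (hd : IsDenseColoring P d) (hrange : P ⊆ Set.range d)
    (hside : OccursAbove P d ∨ OccursBelow P d)
    (habove : OccursAbove P d ∨ NoMaxOrder ι) (hbelow : OccursBelow P d ∨ NoMinOrder ι) :
    IsShuffleColoring P (Sigma.uncurry (fun _ : ι => d) ∘ ofLex) where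
  toIsDenseColoring := .sigmaLex (fun _ => hd) fun p hp i j _ x y =>
    hside.elim (fun h => .inl (h p hp x)) (fun h => .inr (.inl (h p hp y)))
  subset_range p hp := by
    obtain ⟨i⟩ := ‹Nonempty ι›
    obtain ⟨z, hz⟩ := hrange hp
    exact ⟨toLex ⟨i, z⟩, hz⟩
  above := .sigmaLex fun p hp i x => habove.elim (fun h => .inl (h p hp x))
    fun _ => .inr ((exists_gt i).imp fun _ hij => ⟨hij, hrange hp⟩)
  below := .sigmaLex fun p hp i x => hbelow.elim (fun h => .inl (h p hp x))
    fun _ => .inr ((exists_lt i).imp fun _ hji => ⟨hji, hrange hp⟩)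

end SigmaLex

end Coloring

namespace CWord

variable {A : Type}

theorem Iso.refl (u : CWord A) : Iso u u := ⟨OrderIso.refl _, fun _ => rfl⟩

theorem Iso.symm {u v : CWord A} (h : Iso u v) : Iso v u := by
  obtain ⟨e, he⟩ := h
  exact ⟨e.symm, fun x => by rw [← he, e.apply_symm_apply]⟩

theorem Iso.trans {u v w : CWord A} (h : Iso u v) (h' : Iso v w) : Iso u w := by
  obtain ⟨e, he⟩ := h
  obtain ⟨e', he'⟩ := h'
  exact ⟨e.trans e', fun x => (he' (e x)).trans (he x)⟩

theorem Iso.of_eq {u v : CWord A} (h : u = v) : Iso u v := h ▸ .refl u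

instance : Setoid (CWord A) := ⟨Iso, ⟨Iso.refl, Iso.symm, Iso.trans⟩⟩

theorem Iso.of_isEmpty {u v : CWord A} (hu : IsEmpty u.carrier) (hv : IsEmpty v.carrier) :
    Iso u v :=
  ⟨@OrderIso.ofIsEmpty _ _ _ _ hu hv, hu.elim⟩

instance {ι : Type} [Countable ι] {κ : ι → Type} [∀ i, Countable (κ i)] :
    Countable (Σₗ i, κ i) :=
  inferInstanceAs (Countable (Σ i, κ i))

instance {κ₁ κ₂ : Type} [Countable κ₁] [Countable κ₂] : Countable (κ₁ ⊕ₗ κ₂) :=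
  inferInstanceAs (Countable (κ₁ ⊕ κ₂))

section Prod

variable {ι ι' : Type} [LinearOrder ι] [Countable ι] [LinearOrder ι'] [Countable ι']

theorem Iso.prod_reindex {u : ι → CWord A} {v : ι' → CWord A} (e : ι ≃o ι')
    (h : ∀ i, Iso (u i) (v (e i))) : Iso (prod u) (prod v) := by
  choose g hg using h
  refine ⟨StrictMono.orderIsoOfSurjective (fun x => toLex ⟨e (ofLex x).1, g _ (ofLex x).2⟩)
    ?_ ?_, fun x => hg _ _⟩
  · rintro ⟨i, x⟩ ⟨j, y⟩ (⟨_, _, hij⟩ | ⟨_, _, hxy⟩)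
    · exact Sigma.Lex.left _ _ (e.strictMono hij)
    · exact Sigma.Lex.right _ _ ((g i).strictMono hxy)
  · rintro ⟨j, y⟩
    obtain ⟨i, rfl⟩ := e.surjective j
    exact ⟨toLex ⟨i, (g i).symm y⟩,
      congrArg (fun z => toLex (⟨e i, z⟩ : Σ j, (v j).carrier)) ((g i).apply_symm_apply y)⟩

theorem Iso.prod_congr {u v : ι → CWord A} (h : ∀ i, Iso (u i) (v i)) : Iso (prod u) (prod v) :=
  .prod_reindex (OrderIso.refl ι) h

theorem Iso.concat_congr {u u' v v' : CWord A} (hu : Iso u u') (hv : Iso v v') :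
    Iso (concat u v) (concat u' v') :=
  .prod_congr fun b => by cases b <;> assumption

theorem iso_prod_sigmaLex {κ : ι → Type} [∀ i, LinearOrder (κ i)] [∀ i, Countable (κ i)]
    (c : ∀ i, κ i → CWord A) :
    Iso (prod fun i => prod (c i)) (prod (Sigma.uncurry c ∘ ofLex)) := by
  refine ⟨StrictMono.orderIsoOfSurjective
    (fun x => toLex ⟨toLex ⟨(ofLex x).1, (ofLex (ofLex x).2).1⟩, (ofLex (ofLex x).2).2⟩) ?_ ?_,
    fun _ => rfl⟩
  · rintro ⟨i, x⟩ ⟨j, y⟩ (⟨_, _, hij⟩ | ⟨_, _, ⟨_, _, hk⟩ | ⟨_, _, hxy⟩⟩)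
    · exact Sigma.Lex.left _ _ (Sigma.Lex.left _ _ hij)
    · exact Sigma.Lex.left _ _ (Sigma.Lex.right _ _ hk)
    · exact Sigma.Lex.right _ _ hxy
  · rintro ⟨⟨i, k⟩, x⟩
    exact ⟨toLex ⟨i, toLex ⟨k, x⟩⟩, rfl⟩

theorem iso_prod_of_isEmpty_of_ne (u : ι → CWord A) (i₀ : ι)
    (h : ∀ i ≠ i₀, IsEmpty (u i).carrier) : Iso (u i₀) (prod u) := by
  refine ⟨StrictMono.orderIsoOfSurjective (fun x => toLex ⟨i₀, x⟩)
    (fun _ _ hxy => Sigma.Lex.right _ _ hxy) ?_, fun _ => rfl⟩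
  rintro ⟨i, x⟩
  obtain rfl : i = i₀ := by_contra fun hi => (h i hi).elim x
  exact ⟨x, rfl⟩

theorem iso_prod_unique (u : CWord A) : Iso u (prod fun _ : PUnit => u) :=
  iso_prod_of_isEmpty_of_ne (fun _ : PUnit => u) PUnit.unit fun i h =>
    absurd (Subsingleton.elim i _) h

theorem iso_concat_prod_sumLex {κ₁ κ₂ : Type} [LinearOrder κ₁] [Countable κ₁] [LinearOrder κ₂]
    [Countable κ₂] (c₁ : κ₁ → CWord A) (c₂ : κ₂ → CWord A) :
    Iso (concat (prod c₁) (prod c₂)) (prod (Sum.elim c₁ c₂ ∘ ofLex)) := by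
  let f : (concat (prod c₁) (prod c₂)).carrier → (prod (Sum.elim c₁ c₂ ∘ ofLex)).carrier
    | ⟨false, x⟩ => toLex ⟨toLex (.inl (ofLex x).1), (ofLex x).2⟩
    | ⟨true, x⟩ => toLex ⟨toLex (.inr (ofLex x).1), (ofLex x).2⟩
  refine ⟨StrictMono.orderIsoOfSurjective f ?_ ?_, ?_⟩
  · rintro ⟨_ | _, k, x⟩ ⟨_ | _, l, y⟩ (⟨_, _, hb⟩ | ⟨_, _, ⟨_, _, hkl⟩ | ⟨_, _, hxy⟩⟩)
    all_goals first
      | exact absurd hb (by decide)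
      | exact Sigma.Lex.left _ _ (Sum.Lex.inl_lt_inr _ _)
      | exact Sigma.Lex.left _ _ (Sum.Lex.inl_lt_inl_iff.2 hkl)
      | exact Sigma.Lex.left _ _ (Sum.Lex.inr_lt_inr_iff.2 hkl)
      | exact Sigma.Lex.right _ _ hxy
  · rintro ⟨k | k, x⟩
    · exact ⟨toLex ⟨false, toLex ⟨k, x⟩⟩, rfl⟩
    · exact ⟨toLex ⟨true, toLex ⟨k, x⟩⟩, rfl⟩
  · rintro ⟨_ | _, x⟩ <;> rfl

end Prod

theorem iso_concat_assoc (u v w : CWord A) :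
    Iso (concat (concat u v) w) (concat u (concat v w)) := by
  let cu := fun _ : PUnit => u
  let cv := fun _ : PUnit => v
  let cw := fun _ : PUnit => w
  calc concat (concat u v) w ≈ concat (concat (prod cu) (prod cv)) (prod cw) :=
        ((iso_prod_unique u).concat_congr (iso_prod_unique v)).concat_congr (iso_prod_unique w)
    _ ≈ concat (prod (Sum.elim cu cv ∘ ofLex)) (prod cw) :=
        (iso_concat_prod_sumLex cu cv).concat_congr (.refl _)
    _ ≈ prod (Sum.elim (Sum.elim cu cv ∘ ofLex) cw ∘ ofLex) := iso_concat_prod_sumLex _ _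
    _ ≈ prod (Sum.elim cu (Sum.elim cv cw ∘ ofLex) ∘ ofLex) :=
        .prod_reindex (OrderIso.sumLexAssoc _ _ _) (by rintro ((_ | _) | _) <;> exact .refl _)
    _ ≈ concat (prod cu) (prod (Sum.elim cv cw ∘ ofLex)) := (iso_concat_prod_sumLex _ _).symm
    _ ≈ concat (prod cu) (concat (prod cv) (prod cw)) :=
        (Iso.refl _).concat_congr (iso_concat_prod_sumLex cv cw).symm
    _ ≈ concat u (concat v w) :=
        ((iso_prod_unique u).concat_congr
          ((iso_prod_unique v).concat_congr (iso_prod_unique w))).symm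

instance : IsEmpty (epsilon (A := A)).carrier := inferInstanceAs (IsEmpty (Fin 0))

theorem iso_concat_epsilon (u : CWord A) : Iso (concat u epsilon) u :=
  (iso_prod_of_isEmpty_of_ne _ false fun b hb => by
    obtain rfl : b = true := by simpa using hb
    exact inferInstanceAs (IsEmpty (epsilon (A := A)).carrier)).symm

theorem iso_epsilon_concat (u : CWord A) : Iso (concat epsilon u) u :=
  (iso_prod_of_isEmpty_of_ne _ true fun b hb => by
    obtain rfl : b = false := by simpa using hb
    exact inferInstanceAs (IsEmpty (epsilon (A := A)).carrier)).symm

theorem iso_prod_epsilon {ι : Type} [LinearOrder ι] [Countable ι] {u : ι → CWord A}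
    (hu : ∀ i, u i = epsilon) : Iso (prod u) epsilon :=
  .of_isEmpty ⟨fun x => isEmptyElim (cast (congrArg carrier (hu (ofLex x).1)) (ofLex x).2)⟩
    inferInstance

noncomputable def sigmaFinOrderIsoNat (k : ℕ) : (Σₗ _ : ℕ, Fin (k + 1)) ≃o ℕ :=
  StrictMono.orderIsoOfSurjective (fun z => (ofLex z).1 * (k + 1) + (ofLex z).2)
    (by
      rintro ⟨n, i⟩ ⟨m, j⟩ (⟨_, _, hnm⟩ | ⟨_, _, hij⟩)
      · have hblock : (n + 1) * (k + 1) ≤ m * (k + 1) := Nat.mul_le_mul_right _ hnm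
        rw [add_mul, one_mul] at hblock
        change n * (k + 1) + i < m * (k + 1) + j
        omega
      · exact Nat.add_lt_add_left hij _)
    fun m => ⟨toLex ⟨m / (k + 1), ⟨m % (k + 1), Nat.mod_lt _ k.succ_pos⟩⟩, Nat.div_add_mod' m _⟩

open OrderDual in
noncomputable def sigmaFinOrderIsoNatDual (k : ℕ) : (Σₗ _ : ℕᵒᵈ, Fin (k + 1)) ≃o ℕᵒᵈ :=
  StrictMono.orderIsoOfSurjective
    (fun z => toDual (ofDual (ofLex z).1 * (k + 1) + (k - (ofLex z).2)))
    (by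
      rintro ⟨n, i⟩ ⟨m, j⟩ (⟨_, _, hmn⟩ | ⟨_, _, hij⟩)
      · have hblock : (ofDual m + 1) * (k + 1) ≤ ofDual n * (k + 1) :=
          Nat.mul_le_mul_right _ hmn
        rw [add_mul, one_mul] at hblock
        change ofDual m * (k + 1) + (k - j) < ofDual n * (k + 1) + (k - i)
        omega
      · have := j.isLt
        change ofDual n * (k + 1) + (k - j) < ofDual n * (k + 1) + (k - i)
        have : (i : ℕ) < j := hij
        omega)
    fun m => ⟨toLex ⟨toDual (ofDual m / (k + 1)),
      ⟨k - ofDual m % (k + 1), Nat.lt_succ_of_le (Nat.sub_le _ _)⟩⟩, by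
        have := Nat.mod_lt (ofDual m) (by omega : 0 < k + 1)
        change toDual (ofDual m / (k + 1) * (k + 1) + (k - (k - ofDual m % (k + 1)))) = m
        rw [Nat.sub_sub_self (by omega), Nat.div_add_mod']
        rfl⟩

theorem iso_prod_nat_blocks (w : ℕ → CWord A) (k : ℕ) :
    Iso (prod fun n : ℕ => prod fun i : Fin (k + 1) => w (n * (k + 1) + i)) (prod w) :=
  (iso_prod_sigmaLex _).trans (.prod_reindex (sigmaFinOrderIsoNat k) fun _ => .refl _)

open OrderDual in
theorem iso_prod_natDual_blocks (w : ℕᵒᵈ → CWord A) (k : ℕ) :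
    Iso (prod fun n : ℕᵒᵈ => prod fun i : Fin (k + 1) => w (toDual (ofDual n * (k + 1) + (k - i))))
      (prod w) :=
  (iso_prod_sigmaLex _).trans (.prod_reindex (sigmaFinOrderIsoNatDual k) fun _ => .refl _)

noncomputable def punitSumLexNatOrderIso : PUnit ⊕ₗ ℕ ≃o ℕ :=
  StrictMono.orderIsoOfSurjective (Sum.elim (fun _ => 0) Nat.succ ∘ ofLex)
    (by
      rintro (_ | n) (_ | m) h
      · exact absurd (Sum.Lex.inl_lt_inl_iff.1 h) (lt_irrefl _)
      · exact Nat.succ_pos m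
      · exact absurd h Sum.Lex.not_inr_lt_inl
      · exact Nat.succ_lt_succ (Sum.Lex.inr_lt_inr_iff.1 h))
    fun m => by
      cases m with
      | zero => exact ⟨toLex (.inl PUnit.unit), rfl⟩
      | succ m => exact ⟨toLex (.inr m), rfl⟩

open OrderDual in
noncomputable def natDualSumLexPUnitOrderIso : ℕᵒᵈ ⊕ₗ PUnit ≃o ℕᵒᵈ :=
  StrictMono.orderIsoOfSurjective
    (Sum.elim (fun n => toDual (ofDual n + 1)) (fun _ => toDual 0) ∘ ofLex)
    (by
      rintro (n | _) (m | _) h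
      · exact toDual_lt_toDual.2
          (Nat.succ_lt_succ (ofDual_lt_ofDual.2 (Sum.Lex.inl_lt_inl_iff.1 h)))
      · exact toDual_lt_toDual.2 (Nat.succ_pos _)
      · exact absurd h Sum.Lex.not_inr_lt_inl
      · exact absurd (Sum.Lex.inr_lt_inr_iff.1 h) (lt_irrefl _))
    fun m => by
      cases h : ofDual m with
      | zero => exact ⟨toLex (.inr PUnit.unit), congrArg toDual h.symm⟩
      | succ n => exact ⟨toLex (.inl (toDual n)), congrArg toDual h.symm⟩

theorem iso_concat_prod_nat (w : ℕ → CWord A) :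
    Iso (concat (w 0) (prod fun n => w (n + 1))) (prod w) :=
  ((iso_prod_unique _).concat_congr (.refl _)).trans ((iso_concat_prod_sumLex _ _).trans
    (.prod_reindex punitSumLexNatOrderIso (by rintro (_ | _) <;> exact .refl _)))

open OrderDual in
theorem iso_concat_prod_natDual (w : ℕᵒᵈ → CWord A) :
    Iso (concat (prod fun n => w (toDual (ofDual n + 1))) (w (toDual 0))) (prod w) :=
  ((Iso.refl _).concat_congr (iso_prod_unique _)).trans ((iso_concat_prod_sumLex _ _).trans
    (.prod_reindex natDualSumLexPUnitOrderIso (by rintro (_ | _) <;> exact .refl _)))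

def boolOrderIsoFinTwo : Bool ≃o Fin 2 where
  toFun b := cond b 1 0
  invFun i := i = 1
  left_inv b := by cases b <;> rfl
  right_inv i := by fin_cases i <;> rfl
  map_rel_iff' {a b} := by cases a <;> cases b <;> decide

theorem iso_concat_prod_finTwo (u v : CWord A) : Iso (concat u v) (prod ![u, v]) :=
  .prod_reindex boolOrderIsoFinTwo fun b => by cases b <;> exact .refl _

theorem iso_omegaPow_concat (u v : CWord A) :
    Iso (omegaPow (concat u v)) (concat u (omegaPow (concat v u))) := by
  -- Both sides are the alternating word `u v u v ⋯`.
  let w : ℕ → CWord A := fun n => if Even n then u else v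
  have huv : ∀ n, Iso (concat u v) (prod fun i : Fin 2 => w (n * 2 + i)) := fun n =>
    (iso_concat_prod_finTwo u v).trans <| .prod_congr fun i => .of_eq <| by
      fin_cases i <;> simp [w, parity_simps]
  have hvu : ∀ n, Iso (concat v u) (prod fun i : Fin 2 => w (n * 2 + i + 1)) := fun n =>
    (iso_concat_prod_finTwo v u).trans <| .prod_congr fun i => .of_eq <| by
      fin_cases i <;> simp [w, parity_simps]
  calc omegaPow (concat u v) ≈ prod fun n : ℕ => prod fun i : Fin 2 => w (n * 2 + i) :=
        .prod_congr huv
    _ ≈ prod w := iso_prod_nat_blocks w 1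
    _ ≈ concat u (prod fun n => w (n + 1)) := (iso_concat_prod_nat w).symm
    _ ≈ concat u (omegaPow (concat v u)) :=
        (Iso.refl _).concat_congr ((iso_prod_nat_blocks _ 1).symm.trans
          (Iso.prod_congr hvu).symm)

open OrderDual in
theorem iso_omegaStarPow_concat (u v : CWord A) :
    Iso (omegaStarPow (concat v u)) (concat (omegaStarPow (concat u v)) u) := by
  -- Both sides are the alternating word `⋯ v u v u`, whose factors are numbered from the right.
  let w : ℕᵒᵈ → CWord A := fun n => if Even (ofDual n) then u else v
  have hvu : ∀ n : ℕᵒᵈ, Iso (concat v u)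
      (prod fun i : Fin 2 => w (toDual (ofDual n * 2 + (1 - i)))) := fun n =>
    (iso_concat_prod_finTwo v u).trans <| .prod_congr fun i => .of_eq <| by
      fin_cases i <;> simp [w, parity_simps]
  have huv : ∀ n : ℕᵒᵈ, Iso (concat u v)
      (prod fun i : Fin 2 => w (toDual (ofDual n * 2 + (1 - i) + 1))) := fun n =>
    (iso_concat_prod_finTwo u v).trans <| .prod_congr fun i => .of_eq <| by
      fin_cases i <;> simp [w, parity_simps]
  calc omegaStarPow (concat v u)
        ≈ prod fun n : ℕᵒᵈ => prod fun i : Fin 2 => w (toDual (ofDual n * 2 + (1 - i))) :=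
        .prod_congr hvu
    _ ≈ prod w := iso_prod_natDual_blocks w 1
    _ ≈ concat (prod fun n => w (toDual (ofDual n + 1))) u := (iso_concat_prod_natDual w).symm
    _ ≈ concat (omegaStarPow (concat u v)) u :=
        ((iso_prod_natDual_blocks _ 1).symm.trans (Iso.prod_congr huv).symm).concat_congr
          (.refl _)

theorem iso_omegaPow_nPowSucc (u : CWord A) (k : ℕ) :
    Iso (omegaPow (nPowSucc u k)) (omegaPow u) :=
  iso_prod_nat_blocks (fun _ => u) k

theorem iso_omegaStarPow_nPowSucc (u : CWord A) (k : ℕ) :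
    Iso (omegaStarPow (nPowSucc u k)) (omegaStarPow u) :=
  iso_prod_natDual_blocks (fun _ => u) k

theorem _root_.IsShuffleOfWords.exists_isShuffleColoring {P : Set (CWord A)} {s : CWord A}
    (hs : IsShuffleOfWords P s) : ∃ f : ℚ → CWord A, IsShuffleColoring P f ∧ Iso s (prod f) := by
  obtain ⟨f, hfP, hfd, hsf⟩ := hs
  refine ⟨f, ⟨⟨Set.range_subset_iff.2 hfP, hfd⟩, fun p hp => ?_, fun p hp x => ?_,
    fun p hp x => ?_⟩, hsf⟩
  · obtain ⟨q, -, -, hq⟩ := hfd p hp 0 1 one_pos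
    exact ⟨q, hq⟩
  · obtain ⟨q, hxq, -, hq⟩ := hfd p hp x (x + 1) (lt_add_one x)
    exact ⟨q, hxq, hq⟩
  · obtain ⟨q, -, hqx, hq⟩ := hfd p hp (x - 1) x (sub_one_lt x)
    exact ⟨q, hqx, hq⟩

theorem Iso.of_isShuffleColoring {P : Set (CWord A)} {κ₁ κ₂ : Type} [LinearOrder κ₁]
    [Countable κ₁] [LinearOrder κ₂] [Countable κ₂] {c₁ : κ₁ → CWord A} {c₂ : κ₂ → CWord A}
    {u v : CWord A} (h₁ : IsShuffleColoring P c₁) (h₂ : IsShuffleColoring P c₂)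
    (hu : Iso u (prod c₁)) (hv : Iso v (prod c₂)) : Iso u v := by
  obtain ⟨e, he⟩ := h₁.exists_orderIso h₂
  exact hu.trans ((Iso.prod_reindex e fun x => .of_eq (he x).symm).trans hv.symm)

section Shuffle

variable {P : Set (CWord A)} {f : ℚ → CWord A} {s : CWord A} (hf : IsShuffleColoring P f)
  (hs : Iso s (prod f))

include hs

theorem iso_concat_prod_cons (a : CWord A) :
    Iso (concat a s) (prod (Sum.elim (fun _ : PUnit => a) f ∘ ofLex)) :=
  ((iso_prod_unique a).concat_congr hs).trans (iso_concat_prod_sumLex _ _)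

theorem iso_concat_prod_snoc (b : CWord A) :
    Iso (concat s b) (prod (Sum.elim f (fun _ : PUnit => b) ∘ ofLex)) :=
  (hs.concat_congr (iso_prod_unique b)).trans (iso_concat_prod_sumLex _ _)

include hf

theorem shuffle_iso_concat_self : Iso s (concat s s) :=
  .of_isShuffleColoring hf (hf.sumLex hf) hs
    ((hs.concat_congr hs).trans (iso_concat_prod_sumLex f f))

theorem shuffle_iso_concat_letter_self {c : CWord A} (hc : c ∈ P) :
    Iso s (concat s (concat c s)) :=
  .of_isShuffleColoring hf
    { toIsDenseColoring := hf.toIsDenseColoring.sumLex (hf.isDenseColoring_cons hc)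
        (.inl hf.above)
      subset_range := subset_range_sumLex_left _ hf.subset_range
      above := hf.occursAbove_cons.sumLex (.inl hf.above)
      below := hf.below.sumLex (.inr hf.subset_range) }
    hs ((hs.concat_congr (iso_concat_prod_cons hs c)).trans (iso_concat_prod_sumLex _ _))

theorem shuffle_iso_omegaPow_self : Iso s (omegaPow s) :=
  .of_isShuffleColoring hf
    (.sigmaLex_const hf.toIsDenseColoring hf.subset_range (.inl hf.above) (.inl hf.above)
      (.inl hf.below))
    hs ((Iso.prod_congr fun _ => hs).trans (iso_prod_sigmaLex _))

theorem shuffle_iso_omegaPow_concat_letter {c : CWord A} (hc : c ∈ P) :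
    Iso s (omegaPow (concat s c)) :=
  .of_isShuffleColoring hf
    (.sigmaLex_const (hf.isDenseColoring_snoc hc) (subset_range_sumLex_left _ hf.subset_range)
      (.inr hf.occursBelow_snoc) (.inr inferInstance) (.inl hf.occursBelow_snoc))
    hs ((Iso.prod_congr fun _ => iso_concat_prod_snoc hs c).trans (iso_prod_sigmaLex _))

theorem shuffle_iso_omegaStarPow_self : Iso s (omegaStarPow s) :=
  .of_isShuffleColoring hf
    (.sigmaLex_const hf.toIsDenseColoring hf.subset_range (.inl hf.above) (.inl hf.above)
      (.inl hf.below))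
    hs ((Iso.prod_congr fun _ => hs).trans (iso_prod_sigmaLex _))

theorem shuffle_iso_omegaStarPow_letter_concat {c : CWord A} (hc : c ∈ P) :
    Iso s (omegaStarPow (concat c s)) :=
  .of_isShuffleColoring hf
    (.sigmaLex_const (hf.isDenseColoring_cons hc) (subset_range_sumLex_right _ hf.subset_range)
      (.inl hf.occursAbove_cons) (.inl hf.occursAbove_cons) (.inr inferInstance))
    hs ((Iso.prod_congr fun _ => iso_concat_prod_cons hs c).trans (iso_prod_sigmaLex _))

theorem shuffle_iso_shuffle_union {P' P'' : Set (CWord A)} (hP' : P' ⊆ P)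
    (hP'' : P''.Nonempty)
    (hsub : P'' ⊆ {x | x = s ∨ (∃ a ∈ P, x = concat a s) ∨ (∃ b ∈ P, x = concat s b) ∨
      (∃ a ∈ P, ∃ b ∈ P, x = concat (concat a s) b)})
    {t : CWord A} (ht : IsShuffleOfWords (P' ∪ P'') t) : Iso s t := by
  obtain ⟨g, hgP, hgd, htg⟩ := ht
  obtain ⟨e, he⟩ := hP''
  -- Flattened, the factors from `P''` (`s`, `a s`, `s b` or `a s b`) contain every letter of `P`.
  have block : ∀ q, ∃ (κ : Type) (_ : LinearOrder κ) (_ : Countable κ) (c : κ → CWord A),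
      Iso (g q) (prod c) ∧ IsDenseColoring P c ∧ (g q ∈ P'' → P ⊆ Set.range c) := by
    intro q
    by_cases hq : g q ∈ P''
    · rcases hsub hq with h | ⟨a, ha, h⟩ | ⟨b, hb, h⟩ | ⟨a, ha, b, hb, h⟩ <;> rw [h]
      · exact ⟨ℚ, _, _, f, hs, hf.toIsDenseColoring, fun _ => hf.subset_range⟩
      · exact ⟨_, _, _, _, iso_concat_prod_cons hs a, hf.isDenseColoring_cons ha,
          fun _ => subset_range_sumLex_right _ hf.subset_range⟩
      · exact ⟨_, _, _, _, iso_concat_prod_snoc hs b, hf.isDenseColoring_snoc hb,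
          fun _ => subset_range_sumLex_left _ hf.subset_range⟩
      · exact ⟨_, _, _, _,
          ((iso_concat_prod_cons hs a).concat_congr (iso_prod_unique b)).trans
            (iso_concat_prod_sumLex _ _),
          (hf.isDenseColoring_cons ha).sumLex (.const hb) (.inl hf.occursAbove_cons),
          fun _ => subset_range_sumLex_left _ (subset_range_sumLex_right _ hf.subset_range)⟩
    · exact ⟨PUnit, _, _, fun _ => g q, iso_prod_unique _,
        .const (hP' ((hgP q).resolve_right hq)), fun h => absurd h hq⟩
  choose κ _ _ c hgc hc hfull using block
  refine .of_isShuffleColoring hf (.sigmaLex hc fun p hp i j hij => ?_) hs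
    (htg.trans ((Iso.prod_congr hgc).trans (iso_prod_sigmaLex c)))
  obtain ⟨k, hik, hkj, hk⟩ := hgd e (.inr he) i j hij
  exact ⟨k, hik, hkj, hfull k (hk ▸ he) hp⟩

theorem shuffle_iso_shuffle_union_epsilon {t : CWord A}
    (ht : IsShuffleOfWords (P ∪ {epsilon}) t) : Iso s t := by
  obtain ⟨g, hgP, hgd, htg⟩ := ht
  have block : ∀ q, ∃ (κ : Type) (_ : LinearOrder κ) (_ : Countable κ) (c : κ → CWord A),
      Iso (g q) (prod c) ∧ IsDenseColoring P c ∧ (g q ∈ P → g q ∈ Set.range c) := by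
    intro q
    by_cases hq : g q ∈ P
    · exact ⟨PUnit, _, _, fun _ => g q, iso_prod_unique _, .const hq, fun _ => ⟨.unit, rfl⟩⟩
    · obtain heps : g q = epsilon := (hgP q).resolve_left hq
      refine ⟨Fin 0, inferInstance, inferInstance, Fin.elim0, ?_, .of_isEmpty _,
        fun h => absurd h hq⟩
      rw [heps]
      exact .of_isEmpty inferInstance ⟨fun x => isEmptyElim (ofLex x).1⟩
  choose κ _ _ c hgc hc hocc using block
  refine .of_isShuffleColoring hf (.sigmaLex hc fun p hp i j hij => ?_) hs
    (htg.trans ((Iso.prod_congr hgc).trans (iso_prod_sigmaLex c)))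
  obtain ⟨k, hik, hkj, hk⟩ := hgd p (.inl hp) i j hij
  exact ⟨k, hik, hkj, hk ▸ hocc k (hk ▸ hp)⟩

end Shuffle

theorem _root_.IsShuffleOfWords.shuffle_laws {P : Set (CWord A)} {s : CWord A}
    (hs : IsShuffleOfWords P s) {c : CWord A} (hc : c ∈ P) {P' P'' : Set (CWord A)}
    (hP' : P' ⊆ P) (hP'' : P''.Nonempty)
    (hsub : P'' ⊆ {x | x = s ∨ (∃ a ∈ P, x = concat a s) ∨ (∃ b ∈ P, x = concat s b) ∨
      (∃ a ∈ P, ∃ b ∈ P, x = concat (concat a s) b)}) :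
    Iso s (concat s s) ∧ Iso s (concat s (concat c s)) ∧
      Iso s (omegaPow s) ∧ Iso s (omegaPow (concat s c)) ∧
      Iso s (omegaStarPow s) ∧ Iso s (omegaStarPow (concat c s)) ∧
      ∀ t : CWord A, IsShuffleOfWords (P' ∪ P'') t → Iso s t := by
  obtain ⟨f, hf, hsf⟩ := hs.exists_isShuffleColoring
  exact ⟨shuffle_iso_concat_self hf hsf, shuffle_iso_concat_letter_self hf hsf hc,
    shuffle_iso_omegaPow_self hf hsf, shuffle_iso_omegaPow_concat_letter hf hsf hc,
    shuffle_iso_omegaStarPow_self hf hsf, shuffle_iso_omegaStarPow_letter_concat hf hsf hc,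
    fun _ => shuffle_iso_shuffle_union hf hsf hP' hP'' hsub⟩

end CWord

open CWord in
/-- the countable words over `A` satisfy the ⊕-algebra axioms
(A1)–(A4) (for nonempty words) and, together with the empty word `ε`,
the ◦-algebra axiom (A5) as well, with equality of words meaning isomorphism:
`(A^⊕, ·, ω, ω*, η)` is a ⊕-algebra and `(A^◦, ε, ·, ω, ω*, η)` is a ◦-algebra. -/
theorem word_algebras_satisfy_axioms (A : Type) :
    -- `(A^⊕, ·, ω, ω*, η)` satisfies (A1)–(A4) up to isomorphism
    ((∀ u v w : CWord A, Nonempty u.carrier → Nonempty v.carrier → Nonempty w.carrier →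
        Iso (concat (concat u v) w) (concat u (concat v w))) ∧
      (∀ u v : CWord A, Nonempty u.carrier → Nonempty v.carrier →
        Iso (omegaPow (concat u v)) (concat u (omegaPow (concat v u)))) ∧
      (∀ u : CWord A, Nonempty u.carrier → ∀ n : ℕ,
        Iso (omegaPow (nPowSucc u n)) (omegaPow u)) ∧
      (∀ u v : CWord A, Nonempty u.carrier → Nonempty v.carrier →
        Iso (omegaStarPow (concat v u)) (concat (omegaStarPow (concat u v)) u)) ∧
      (∀ u : CWord A, Nonempty u.carrier → ∀ n : ℕ,
        Iso (omegaStarPow (nPowSucc u n)) (omegaStarPow u)) ∧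
      (∀ P : Set (CWord A), P.Finite → P.Nonempty → (∀ u ∈ P, Nonempty u.carrier) →
        ∀ s : CWord A, IsShuffleOfWords P s → ∀ c ∈ P, ∀ P' ⊆ P,
        ∀ P'' : Set (CWord A), P''.Nonempty →
        P'' ⊆ {x | x = s ∨ (∃ a ∈ P, x = concat a s) ∨ (∃ b ∈ P, x = concat s b) ∨
                   (∃ a ∈ P, ∃ b ∈ P, x = concat (concat a s) b)} →
          Iso s (concat s s) ∧ Iso s (concat s (concat c s)) ∧
          Iso s (omegaPow s) ∧ Iso s (omegaPow (concat s c)) ∧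
          Iso s (omegaStarPow s) ∧ Iso s (omegaStarPow (concat c s)) ∧
          ∀ t : CWord A, IsShuffleOfWords (P' ∪ P'') t → Iso s t)) ∧
    -- `(A^◦, ε, ·, ω, ω*, η)` satisfies (A1)–(A5) up to isomorphism
    ((∀ u v w : CWord A, Iso (concat (concat u v) w) (concat u (concat v w))) ∧
      (∀ u v : CWord A, Iso (omegaPow (concat u v)) (concat u (omegaPow (concat v u)))) ∧
      (∀ (u : CWord A) (n : ℕ), Iso (omegaPow (nPowSucc u n)) (omegaPow u)) ∧
      (∀ u v : CWord A,
        Iso (omegaStarPow (concat v u)) (concat (omegaStarPow (concat u v)) u)) ∧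
      (∀ (u : CWord A) (n : ℕ), Iso (omegaStarPow (nPowSucc u n)) (omegaStarPow u)) ∧
      (∀ P : Set (CWord A), P.Finite → P.Nonempty →
        ∀ s : CWord A, IsShuffleOfWords P s → ∀ c ∈ P, ∀ P' ⊆ P,
        ∀ P'' : Set (CWord A), P''.Nonempty →
        P'' ⊆ {x | x = s ∨ (∃ a ∈ P, x = concat a s) ∨ (∃ b ∈ P, x = concat s b) ∨
                   (∃ a ∈ P, ∃ b ∈ P, x = concat (concat a s) b)} →
          Iso s (concat s s) ∧ Iso s (concat s (concat c s)) ∧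
          Iso s (omegaPow s) ∧ Iso s (omegaPow (concat s c)) ∧
          Iso s (omegaStarPow s) ∧ Iso s (omegaStarPow (concat c s)) ∧
          ∀ t : CWord A, IsShuffleOfWords (P' ∪ P'') t → Iso s t) ∧
      -- (A5)
      (∀ x : CWord A, Iso (concat x epsilon) x) ∧
      (∀ x : CWord A, Iso (concat epsilon x) x) ∧
      Iso (omegaPow (epsilon (A := A))) epsilon ∧
      Iso (omegaStarPow (epsilon (A := A))) epsilon ∧
      (∀ w : CWord A, IsShuffleOfWords {epsilon} w → Iso w epsilon) ∧
      (∀ P : Set (CWord A), P.Finite → P.Nonempty →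
        ∀ s t : CWord A, IsShuffleOfWords P s → IsShuffleOfWords (P ∪ {epsilon}) t →
          Iso s t)) := by
  refine ⟨⟨fun u v w _ _ _ => iso_concat_assoc u v w, fun u v _ _ => iso_omegaPow_concat u v,
      fun u _ => iso_omegaPow_nPowSucc u, fun u v _ _ => iso_omegaStarPow_concat u v,
      fun u _ => iso_omegaStarPow_nPowSucc u,
      fun _ _ _ _ _ hs _ hc _ hP' _ hP'' hsub => hs.shuffle_laws hc hP' hP'' hsub⟩,
    ⟨iso_concat_assoc, iso_omegaPow_concat, iso_omegaPow_nPowSucc, iso_omegaStarPow_concat,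
      iso_omegaStarPow_nPowSucc,
      fun _ _ _ _ hs _ hc _ hP' _ hP'' hsub => hs.shuffle_laws hc hP' hP'' hsub,
      iso_concat_epsilon, iso_epsilon_concat, iso_prod_epsilon fun _ => rfl,
      iso_prod_epsilon fun _ => rfl, fun w ⟨g, hg, _, hwg⟩ => hwg.trans (iso_prod_epsilon hg),
      fun _ _ _ s t hs ht => ?_⟩⟩
  obtain ⟨f, hf, hsf⟩ := hs.exists_isShuffleColoring
  exact shuffle_iso_shuffle_union_epsilon hf hsf ht
end

section
/- Let α be a countable linear order with a minimum element ⊥ and no maximum element, let (S,·) be a finite semigroup, and let f be an additive labelling from α to S. Then there exist a strictly increasing sequence ⊥ < x₁ < x₂ < ⋯ of elements of α and elements a,e ∈ S such that: (i) for every y ∈ α there exists i with x_i > y; (ii) f(⊥,x_i) = a for all i > 0; and (iii) f(x_i,x_j) = e for all j > i > 0. Moreover, such an e is necessarily idempotent (e·e = e). -/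
open Set

private lemma infinite_fiber' {S : Type} [Finite S] {A : Set ℕ} (hA : A.Infinite)
    (c : ℕ → S) : ∃ s, {n | n ∈ A ∧ c n = s}.Infinite := by
  haveI := hA.to_subtype
  obtain ⟨s, hs⟩ := Finite.exists_infinite_fiber (fun x : A => c x)
  refine ⟨s, ?_⟩
  have h1 : ((fun x : A => c x) ⁻¹' {s}).Infinite := Set.infinite_coe_iff.mp hs
  have h2 : ((Subtype.val : A → ℕ) '' ((fun x : A => c x) ⁻¹' {s})).Infinite :=
    h1.image (Set.injOn_of_injective Subtype.val_injective)
  refine h2.mono ?_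
  rintro x ⟨⟨y, hy⟩, hmem, rfl⟩
  exact ⟨hy, hmem⟩

private lemma ramsey_step {S : Type} [Finite S] (c : ℕ → ℕ → S)
    (A : {B : Set ℕ // B.Infinite}) :
    ∃ p : ℕ × {B : Set ℕ // B.Infinite} × S,
      p.1 ∈ A.1 ∧ p.2.1.1 ⊆ A.1 ∧ (∀ b ∈ p.2.1.1, p.1 < b) ∧
      (∀ b ∈ p.2.1.1, c p.1 b = p.2.2) := by
  obtain ⟨a, haA⟩ := A.2.nonempty
  have hA' : (A.1 \ Set.Iic a).Infinite := A.2.diff (Set.finite_Iic a)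
  obtain ⟨s, hs⟩ := infinite_fiber' hA' (c a)
  refine ⟨⟨a, ⟨{n | n ∈ A.1 \ Set.Iic a ∧ c a n = s}, hs⟩, s⟩, haA, ?_, ?_, ?_⟩
  · rintro b ⟨⟨hb, _⟩, _⟩; exact hb
  · rintro b ⟨⟨_, hb⟩, _⟩; exact lt_of_not_ge hb
  · rintro b ⟨_, hb⟩; exact hb

private lemma infinite_ramsey_pairs {S : Type} [Finite S] (c : ℕ → ℕ → S) :
    ∃ g : ℕ → ℕ, StrictMono g ∧ ∃ e, ∀ i j, i < j → c (g i) (g j) = e := by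
  classical
  let step : {B : Set ℕ // B.Infinite} → ℕ × {B : Set ℕ // B.Infinite} × S :=
    fun A => (ramsey_step c A).choose
  have hstep : ∀ A, (step A).1 ∈ A.1 ∧ (step A).2.1.1 ⊆ A.1 ∧
      (∀ b ∈ (step A).2.1.1, (step A).1 < b) ∧
      (∀ b ∈ (step A).2.1.1, c (step A).1 b = (step A).2.2) :=
    fun A => (ramsey_step c A).choose_spec
  let A : ℕ → {B : Set ℕ // B.Infinite} := fun k =>
    Nat.rec ⟨Set.univ, Set.infinite_univ⟩ (fun _ Ak => (step Ak).2.1) k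
  let n : ℕ → ℕ := fun k => (step (A k)).1
  let d : ℕ → S := fun k => (step (A k)).2.2
  have hAsucc : ∀ k, (A (k + 1)).1 ⊆ (A k).1 := fun k => (hstep (A k)).2.1
  have hchain : ∀ k l, k ≤ l → (A l).1 ⊆ (A k).1 := by
    intro k l hkl
    induction l with
    | zero => simp_all
    | succ m ih =>
      rcases Nat.lt_or_ge k (m+1) with h | h
      · exact (hAsucc m).trans (ih (Nat.lt_succ_iff.mp h))
      · have : k = m + 1 := le_antisymm (by omega) h
        subst this; exact subset_rfl
  have hmem : ∀ k l, k < l → n l ∈ (A (k + 1)).1 := by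
    intro k l hkl
    exact hchain (k+1) l hkl ((hstep (A l)).1)
  have hlt : ∀ k l, k < l → n k < n l := by
    intro k l hkl
    exact (hstep (A k)).2.2.1 _ (hmem k l hkl)
  have hcol : ∀ k l, k < l → c (n k) (n l) = d k := by
    intro k l hkl
    exact (hstep (A k)).2.2.2 _ (hmem k l hkl)
  obtain ⟨e, he⟩ := Finite.exists_infinite_fiber d
  have hinf : (setOf (fun k => d k = e)).Infinite := Set.infinite_coe_iff.mp he
  refine ⟨fun i => n (Nat.nth (fun k => d k = e) i), ?_, e, ?_⟩
  · intro i j hij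
    exact hlt _ _ (Nat.nth_strictMono hinf hij)
  · intro i j hij
    rw [hcol _ _ (Nat.nth_strictMono hinf hij)]
    exact Nat.nth_mem_of_infinite hinf i

/-- Ramsey's theorem for additive labellings.  Let `α` be a
countable linear order with a minimum element `⊥` and no maximum element, let
`(S, ·)` be a finite semigroup, and let `f` be an additive labelling from `α`
to `S`.  Then there is a strictly increasing cofinal sequence
`⊥ < x 0 < x 1 < ⋯` and elements `a, e` with `f ⊥ (x i) = a` and
`f (x i) (x j) = e` for all `i < j`; moreover any such `e` is idempotent. -/
theorem additive_ramsey {α S : Type} [LinearOrder α] [Countable α]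
    [OrderBot α] [NoMaxOrder α] [Finite S]
    (mul : S → S → S) (hassoc : ∀ a b c : S, mul (mul a b) c = mul a (mul b c))
    (f : α → α → S)
    (hadd : ∀ x y z : α, x < y → y < z → mul (f x y) (f y z) = f x z) :
    (∃ (x : ℕ → α) (a e : S),
      StrictMono x ∧ (∀ i : ℕ, ⊥ < x i) ∧ (∀ y : α, ∃ i : ℕ, y < x i) ∧
      (∀ i : ℕ, f ⊥ (x i) = a) ∧ (∀ i j : ℕ, i < j → f (x i) (x j) = e)) ∧
    (∀ (x : ℕ → α) (e : S), StrictMono x →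
      (∀ i j : ℕ, i < j → f (x i) (x j) = e) → mul e e = e) := by
  classical
  constructor
  · -- build a strictly increasing cofinal sequence y
    obtain ⟨u, hu⟩ := exists_surjective_nat α
    let y : ℕ → α := fun k =>
      Nat.rec (exists_gt (⊥ : α)).choose
        (fun m ym => (exists_gt (max ym (u m))).choose) k
    have hy0 : (⊥ : α) < y 0 := (exists_gt (⊥ : α)).choose_spec
    have hysucc : ∀ m, max (y m) (u m) < y (m + 1) := fun m =>
      (exists_gt (max (y m) (u m))).choose_spec
    have hymono : StrictMono y := strictMono_nat_of_lt_succ fun m =>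
      lt_of_le_of_lt (le_max_left _ _) (hysucc m)
    have hybot : ∀ k, (⊥ : α) < y k := fun k =>
      lt_of_lt_of_le hy0 (hymono.monotone (Nat.zero_le k))
    have hycof : ∀ a : α, ∃ k, a < y k := by
      intro a
      obtain ⟨m, rfl⟩ := hu a
      exact ⟨m + 1, lt_of_le_of_lt (le_max_right _ _) (hysucc m)⟩
    -- apply Ramsey to the pair coloring
    obtain ⟨g, hg, ⟨a, e⟩, hge⟩ :=
      infinite_ramsey_pairs (fun i j => ((f ⊥ (y i), f (y i) (y j)) : S × S))
    refine ⟨fun k => y (g k), a, e, ?_, ?_, ?_, ?_, ?_⟩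
    · exact hymono.comp hg
    · intro i; exact hybot _
    · intro b
      obtain ⟨k, hk⟩ := hycof b
      exact ⟨k, lt_of_lt_of_le hk (hymono.monotone (hg.le_apply))⟩
    · intro i
      have := hge i (i + 1) (Nat.lt_succ_self i)
      exact congrArg Prod.fst this
    · intro i j hij
      have := hge i j hij
      exact congrArg Prod.snd this
  · intro x e hx he
    have h01 := he 0 1 one_pos
    have h12 := he 1 2 one_lt_two
    have h02 := he 0 2 two_pos
    calc mul e e = mul (f (x 0) (x 1)) (f (x 1) (x 2)) := by rw [h01, h12]
      _ = f (x 0) (x 2) := hadd _ _ _ (hx one_pos) (hx one_lt_two)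
      _ = e := h02
end

section
/- Let A be a finite set, let α be a countable dense linear order with at least two elements, and let w : α → A be a word. Then w contains a factor that is an η-shuffle: there exist a nonempty convex subset I of α whose induced order is countable, dense, and without endpoints (hence isomorphic to ℚ) and a nonempty subset B ⊆ A such that w(x) ∈ B for every x ∈ I and, for every a ∈ B, the set {x ∈ I : w(x) = a} is dense in I. -/
open Set

/-- Take an interval whose set of letters is minimal for inclusion, which exists because `Set A`
is well-founded for finite `A`. -/
theorem exists_Ioo_forall_image_Ioo_eq {A α : Type*} [Finite A] [LinearOrder α] [Nontrivial α]
    (w : α → A) :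
    ∃ u v, u < v ∧ ∀ x y, x < y → Ioo x y ⊆ Ioo u v → w '' Ioo x y = w '' Ioo u v := by
  obtain ⟨_, ⟨u, v, huv, rfl⟩, hmin⟩ := wellFounded_lt.has_min
    {s : Set A | ∃ u v, u < v ∧ w '' Ioo u v = s} <| by
      obtain ⟨a, b, hab⟩ := exists_pair_lt α
      exact ⟨_, a, b, hab, rfl⟩
  refine ⟨u, v, huv, fun x y hxy hsub => ?_⟩
  exact eq_of_le_of_not_lt (image_mono hsub) (hmin _ ⟨x, y, hxy, rfl⟩)

/-- every word over a finite alphabet indexed by a countable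
dense linear order (with at least two elements) contains a factor that is an
η-shuffle: there are a nonempty convex subset `I` whose induced order is
countable, dense and without endpoints, and a nonempty set `B` of letters
such that only letters of `B` occur in `I` and every letter of `B` occurs on
a dense subset of `I`. -/
theorem dense_word_contains_shuffle_factor {A α : Type} [Finite A]
    [LinearOrder α] [Countable α] [DenselyOrdered α] [Nontrivial α]
    (w : α → A) :
    ∃ I : Set α, I.Nonempty ∧ I.OrdConnected ∧
      Countable ↥I ∧ DenselyOrdered ↥I ∧ NoMinOrder ↥I ∧ NoMaxOrder ↥I ∧
      ∃ B : Set A, B.Nonempty ∧ (∀ x ∈ I, w x ∈ B) ∧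
        ∀ a ∈ B, ∀ x ∈ I, ∀ y ∈ I, x < y →
          ∃ z ∈ I, x < z ∧ z < y ∧ w z = a := by
  obtain ⟨u, v, huv, hstable⟩ := exists_Ioo_forall_image_Ioo_eq w
  refine ⟨Ioo u v, nonempty_Ioo.2 huv, ordConnected_Ioo, inferInstance, inferInstance,
    inferInstance, inferInstance, w '' Ioo u v, (nonempty_Ioo.2 huv).image w,
    fun x hx => mem_image_of_mem w hx, ?_⟩
  intro a ha x hx y hy hxy
  have hsub : Ioo x y ⊆ Ioo u v := Ioo_subset_Ioo hx.1.le hy.2.le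
  rw [← hstable x y hxy hsub] at ha
  obtain ⟨z, hz, rfl⟩ := ha
  exact ⟨z, hsub hz, hz.1, hz.2, rfl⟩
end

section
/- Let T be a condensation tree over a linear order α and let I be a nonempty convex subset of α. Then T|_I := {I ∩ J : J ∈ T, I ∩ J ≠ ∅} is a condensation tree over I (with the induced order); moreover rank(T|_I) ≤ rank(T), and for every nonempty convex subset J of I, (T|_I)|_J = T|_J. -/
section Trees

variable {α : Type}

/-- `I < J` pointwise, for subsets of a linear order. -/
def SetLT [LinearOrder α] (I J : Set α) : Prop := ∀ x ∈ I, ∀ y ∈ J, x < y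

/-- `I` is a convex subset of the suborder induced on `R`. -/
def ConvexIn [LinearOrder α] (R I : Set α) : Prop :=
  ∀ x ∈ I, ∀ y ∈ I, ∀ z ∈ R, x < z → z < y → z ∈ I

/-- `T` is a condensation tree over the suborder induced on `R`:
a set of nonempty convex subsets of `R` containing the root `R`, pairwise
comparable-or-disjoint, such that the union of the members properly contained
in a given member is that member or empty, and all chains are finite. -/
structure IsCondTreeOn [LinearOrder α] (R : Set α) (T : Set (Set α)) : Prop where
  root_mem : R ∈ T
  mem_subset : ∀ I ∈ T, I ⊆ R
  mem_nonempty : ∀ I ∈ T, I.Nonempty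
  mem_convex : ∀ I ∈ T, ConvexIn R I
  comparable_or_disjoint : ∀ I ∈ T, ∀ J ∈ T, I ⊆ J ∨ J ⊆ I ∨ I ∩ J = ∅
  children_union : ∀ I ∈ T,
    ⋃₀ {J | J ∈ T ∧ J ⊂ I} = I ∨ ⋃₀ {J | J ∈ T ∧ J ⊂ I} = ∅
  chains_finite : ∀ C ⊆ T, IsChain (· ⊆ ·) C → C.Finite

/-- A leaf of `T`: a member minimal with respect to inclusion. -/
def IsLeafOf (T : Set (Set α)) (I : Set α) : Prop :=
  I ∈ T ∧ ∀ J ∈ T, J ⊆ I → J = I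

/-- `J` is a child of `I` in `T`: a maximal member of `T` properly contained in `I`. -/
def IsChildOf (T : Set (Set α)) (J I : Set α) : Prop :=
  J ∈ T ∧ J ⊂ I ∧ ∀ K ∈ T, J ⊂ K → I ⊆ K

end Trees
/-- The restriction `T|_I = {I ∩ J : J ∈ T, I ∩ J ≠ ∅}` of a condensation tree
to a convex subset `I`. -/
def restrictTree {α : Type} (T : Set (Set α)) (I : Set α) : Set (Set α) :=
  {K | ∃ J ∈ T, K = I ∩ J ∧ (I ∩ J).Nonempty}

open Classical in
/-- The rank of the condensation tree `T` with root `R`, defined by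
well-founded recursion on the (well-founded, since all chains in `T` are
finite) child relation: the rank of a leaf is `0` and the rank of an internal
node is the supremum of `rank + 1` over its children. -/
noncomputable def treeRank {α : Type} [LinearOrder α] (R : Set α)
    (T : Set (Set α)) : Ordinal :=
  if h : R ∈ T ∧
      WellFounded (fun J I : {J : Set α // J ∈ T} => IsChildOf T J.1 I.1) then
    (h.2.apply (⟨R, h.1⟩ : {J : Set α // J ∈ T})).rank
  else 0


/-!
Intersecting with `I` preserves inclusion, disjointness and convexity, and it maps chains of
`T|_I` back to chains of `T`. For the covering condition, represent a node `I ∩ J` of `T|_I`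
by a `⊂`-minimal `J`: the members of `T` covering `J` then cut out proper sub-nodes covering
`I ∩ J`. For the rank, a child `I ∩ J'` of `I ∩ J` in `T|_I` has `J' ⊂ J`, and ranks in `T` are
strictly monotone along `⊂`, so well-founded induction bounds ranks in `T|_I` by ranks in `T`.
-/

open Set

theorem nonempty_of_mem_restrictTree {α : Type} {T : Set (Set α)} {I K : Set α}
    (hK : K ∈ restrictTree T I) : K.Nonempty := by
  obtain ⟨J, -, rfl, hJ⟩ := hK
  exact hJ

theorem restrictTree_restrictTree {α : Type} {T : Set (Set α)} {I J : Set α} (hJI : J ⊆ I) :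
    restrictTree (restrictTree T I) J = restrictTree T J := by
  have hinter : ∀ L : Set α, J ∩ (I ∩ L) = J ∩ L := fun L => by
    rw [← inter_assoc, inter_eq_left.2 hJI]
  ext K
  constructor
  · rintro ⟨_, ⟨L, hL, rfl, -⟩, rfl, hne⟩
    exact ⟨L, hL, hinter L, hinter L ▸ hne⟩
  · rintro ⟨L, hL, rfl, hne⟩
    obtain ⟨a, haJ, haL⟩ := hne
    exact ⟨I ∩ L, ⟨L, hL, rfl, a, hJI haJ, haL⟩, (hinter L).symm, a, haJ, hJI haJ, haL⟩

namespace IsCondTreeOn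

variable {α : Type} [LinearOrder α] {R I : Set α} {T : Set (Set α)}

theorem subset_or_subset_of_inter_nonempty (hT : IsCondTreeOn R T) {A B : Set α}
    (hA : A ∈ T) (hB : B ∈ T) (h : (A ∩ B).Nonempty) : A ⊆ B ∨ B ⊆ A :=
  (hT.comparable_or_disjoint A hA B hB).imp_right (Or.resolve_right · h.ne_empty)

theorem wellFoundedOn_ssubset (hT : IsCondTreeOn R T) : T.WellFoundedOn (· ⊂ ·) := by
  rw [wellFoundedOn_iff_no_descending_seq]
  intro f hfT
  have hchain : IsChain (· ⊆ ·) (range f) := by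
    rintro _ ⟨m, rfl⟩ _ ⟨n, rfl⟩ hmn
    rcases lt_or_gt_of_ne (ne_of_apply_ne f hmn) with h | h
    · exact Or.inr (f.map_rel_iff.2 h).subset
    · exact Or.inl (f.map_rel_iff.2 h).subset
  exact infinite_range_of_injective f.injective
    (hT.chains_finite _ (range_subset_iff.2 hfT) hchain)

theorem wellFounded_isChildOf (hT : IsCondTreeOn R T) :
    WellFounded (fun J K : T => IsChildOf T J K) :=
  Subrelation.wf (fun h => h.2.1) hT.wellFoundedOn_ssubset

theorem exists_isChildOf_superset (hT : IsCondTreeOn R T) {J K : Set α} (hJ : J ∈ T)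
    (hK : K ∈ T) (hJK : J ⊂ K) : ∃ M, IsChildOf T M K ∧ J ⊆ M := by
  obtain ⟨a, ha⟩ := hT.mem_nonempty J hJ
  set S := {M | M ∈ T ∧ J ⊆ M ∧ M ⊂ K}
  have hS : S.Finite := hT.chains_finite S (fun M hM => hM.1) fun A hA B hB _ =>
    hT.subset_or_subset_of_inter_nonempty hA.1 hB.1 ⟨a, hA.2.1 ha, hB.2.1 ha⟩
  obtain ⟨M, ⟨hMT, hJM, hMK⟩, hMmax⟩ := hS.exists_maximal ⟨J, hJ, subset_rfl, hJK⟩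
  refine ⟨M, ⟨hMT, hMK, fun N hN hMN => ?_⟩, hJM⟩
  have haN : a ∈ N ∩ K := ⟨hMN.subset (hJM ha), hMK.subset (hJM ha)⟩
  rcases hT.subset_or_subset_of_inter_nonempty hN hK ⟨a, haN⟩ with hNK | hKN
  · obtain rfl | hNK := hNK.eq_or_ssubset
    · exact subset_rfl
    · exact absurd (hMmax ⟨hN, hJM.trans hMN.subset, hNK⟩ hMN.subset) hMN.not_subset
  · exact hKN

noncomputable def nodeRank (hT : IsCondTreeOn R T) (J : T) : Ordinal :=
  (hT.wellFounded_isChildOf.apply J).rank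

theorem treeRank_eq_nodeRank (hT : IsCondTreeOn R T) :
    treeRank R T = hT.nodeRank ⟨R, hT.root_mem⟩ :=
  dif_pos ⟨hT.root_mem, hT.wellFounded_isChildOf⟩

theorem nodeRank_lt_of_isChildOf (hT : IsCondTreeOn R T) {J K : T} (h : IsChildOf T J K) :
    hT.nodeRank J < hT.nodeRank K :=
  Acc.rank_lt_of_rel (hT.wellFounded_isChildOf.apply K) h

theorem nodeRank_le (hT : IsCondTreeOn R T) {J : T} {o : Ordinal}
    (h : ∀ K : T, IsChildOf T K J → hT.nodeRank K < o) : hT.nodeRank J ≤ o := by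
  rw [nodeRank, Acc.rank_eq]
  exact Ordinal.iSup_le fun K => Order.succ_le_of_lt (h K.1 K.2)

theorem nodeRank_lt_of_ssubset (hT : IsCondTreeOn R T) {J K : T} (h : J.1 ⊂ K.1) :
    hT.nodeRank J < hT.nodeRank K := by
  induction K using hT.wellFounded_isChildOf.induction with
  | _ K ih =>
    obtain ⟨M, hMK, hJM⟩ := hT.exists_isChildOf_superset J.2 K.2 h
    have hM := hT.nodeRank_lt_of_isChildOf (J := ⟨M, hMK.1⟩) hMK
    obtain hJM | hJM := hJM.eq_or_ssubset
    · rwa [show J = ⟨M, hMK.1⟩ from Subtype.ext hJM]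
    · exact (ih _ hMK hJM).trans hM

theorem ssubset_of_inter_ssubset_inter (hT : IsCondTreeOn R T) {J K : Set α} (hJ : J ∈ T)
    (hK : K ∈ T) (hne : (I ∩ J).Nonempty) (h : I ∩ J ⊂ I ∩ K) : J ⊂ K := by
  obtain ⟨a, haI, haJ⟩ := hne
  rcases hT.subset_or_subset_of_inter_nonempty hJ hK ⟨a, haJ, (h.subset ⟨haI, haJ⟩).2⟩
    with hJK | hKJ
  · exact hJK.ssubset_of_ne (by rintro rfl; exact h.ne rfl)
  · exact absurd (inter_subset_inter_right I hKJ) h.not_subset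

theorem restrictTree_children_union (hT : IsCondTreeOn R T) {K : Set α}
    (hK : K ∈ restrictTree T I) :
    ⋃₀ {L | L ∈ restrictTree T I ∧ L ⊂ K} = K ∨
      ⋃₀ {L | L ∈ restrictTree T I ∧ L ⊂ K} = ∅ := by
  obtain ⟨J, hJ, rfl, -⟩ := hK
  have hreps : {J' | J' ∈ T ∧ I ∩ J' = I ∩ J} ⊆ T := fun _ h => h.1
  obtain ⟨J₀, ⟨hJ₀, hJ₀J⟩, hJ₀min⟩ :=
    (hT.wellFoundedOn_ssubset.subset hreps).exists_minimal ⟨J, hJ, rfl⟩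
  rw [← hJ₀J]
  rcases hT.children_union J₀ hJ₀ with hcover | hempty
  · left
    refine (sUnion_subset fun L hL => hL.2.subset).antisymm fun x hx => ?_
    obtain ⟨J', ⟨hJ', hJ'J₀⟩, hxJ'⟩ := hcover.superset hx.2
    have hsub : I ∩ J' ⊂ I ∩ J₀ := (inter_subset_inter_right I hJ'J₀.subset).ssubset_of_ne
      fun he => hJ'J₀.not_subset (hJ₀min ⟨hJ', he.trans hJ₀J⟩ hJ'J₀.subset)
    exact ⟨I ∩ J', ⟨⟨J', hJ', rfl, x, hx.1, hxJ'⟩, hsub⟩, hx.1, hxJ'⟩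
  · right
    refine sUnion_eq_empty.2 fun L ⟨⟨J', hJ', hL, hne⟩, hLJ₀⟩ => ?_
    subst hL
    obtain ⟨b, hb⟩ := hT.mem_nonempty J' hJ'
    have hJ'J₀ := hT.ssubset_of_inter_ssubset_inter hJ' hJ₀ hne hLJ₀
    exact (hempty.subset ⟨J', ⟨hJ', hJ'J₀⟩, hb⟩ : b ∈ (∅ : Set α)).elim

theorem restrictTree_chains_finite (hT : IsCondTreeOn R T) {C : Set (Set α)}
    (hC : C ⊆ restrictTree T I) (hchain : IsChain (· ⊆ ·) C) : C.Finite := by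
  set D := {J | J ∈ T ∧ I ∩ J ∈ C}
  have hcomp : ∀ {J₁ J₂}, J₁ ∈ D → J₂ ∈ D → I ∩ J₁ ⊆ I ∩ J₂ → J₁ ⊆ J₂ ∨ J₂ ⊆ J₁ :=
    fun h₁ h₂ h => by
      obtain ⟨a, ha⟩ := nonempty_of_mem_restrictTree (hC h₁.2)
      exact hT.subset_or_subset_of_inter_nonempty h₁.1 h₂.1 ⟨a, ha.2, (h ha).2⟩
  have hD : IsChain (· ⊆ ·) D := fun J₁ h₁ J₂ h₂ _ => by
    rcases hchain.total h₁.2 h₂.2 with h | h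
    · exact hcomp h₁ h₂ h
    · exact (hcomp h₂ h₁ h).symm
  refine ((hT.chains_finite D (fun J hJ => hJ.1) hD).image (I ∩ ·)).subset fun K hK => ?_
  obtain ⟨J, hJ, rfl, -⟩ := hC hK
  exact ⟨J, ⟨hJ, hK⟩, rfl⟩

theorem restrict (hT : IsCondTreeOn R T) (hIR : I ⊆ R) (hI : I.Nonempty) :
    IsCondTreeOn I (restrictTree T I) where
  root_mem := ⟨R, hT.root_mem, (inter_eq_left.2 hIR).symm, by rwa [inter_eq_left.2 hIR]⟩
  mem_subset := by
    rintro _ ⟨J, -, rfl, -⟩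
    exact inter_subset_left
  mem_nonempty _ := nonempty_of_mem_restrictTree
  mem_convex := by
    rintro _ ⟨J, hJ, rfl, -⟩ x hx y hy z hz hxz hzy
    exact ⟨hz, hT.mem_convex J hJ x hx.2 y hy.2 z (hIR hz) hxz hzy⟩
  comparable_or_disjoint := by
    rintro _ ⟨J₁, hJ₁, rfl, -⟩ _ ⟨J₂, hJ₂, rfl, -⟩
    rcases hT.comparable_or_disjoint J₁ hJ₁ J₂ hJ₂ with h | h | h
    · exact Or.inl (inter_subset_inter_right I h)
    · exact Or.inr (Or.inl (inter_subset_inter_right I h))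
    · exact Or.inr (Or.inr (by rw [inter_inter_inter_comm, h, inter_empty]))
  children_union _ := hT.restrictTree_children_union
  chains_finite _ := hT.restrictTree_chains_finite

theorem nodeRank_restrictTree_le (hT : IsCondTreeOn R T)
    (hTI : IsCondTreeOn I (restrictTree T I)) (K : restrictTree T I) (J : T)
    (hKJ : K.1 = I ∩ J) : hTI.nodeRank K ≤ hT.nodeRank J := by
  induction K using hTI.wellFounded_isChildOf.induction generalizing J with
  | _ K ih =>
    refine hTI.nodeRank_le fun L hLK => ?_
    obtain ⟨J', hJ', hLJ', hne⟩ := L.2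
    have hJ'J : J' ⊂ J := hT.ssubset_of_inter_ssubset_inter hJ' J.2 hne (hLJ' ▸ hKJ ▸ hLK.2.1)
    exact (ih L hLK ⟨J', hJ'⟩ hLJ').trans_lt (hT.nodeRank_lt_of_ssubset hJ'J)

theorem treeRank_restrictTree_le (hT : IsCondTreeOn R T) (hIR : I ⊆ R) (hI : I.Nonempty) :
    treeRank I (restrictTree T I) ≤ treeRank R T := by
  rw [(hT.restrict hIR hI).treeRank_eq_nodeRank, hT.treeRank_eq_nodeRank]
  exact hT.nodeRank_restrictTree_le _ _ _ (inter_eq_left.2 hIR).symm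

end IsCondTreeOn

theorem restrict_condensation_tree_general {α : Type} [LinearOrder α]
    (T : Set (Set α)) (hT : IsCondTreeOn Set.univ T)
    (I : Set α) (hne : I.Nonempty) :
    IsCondTreeOn I (restrictTree T I) ∧
    treeRank I (restrictTree T I) ≤ treeRank Set.univ T ∧
    ∀ J : Set α, J ⊆ I → J.Nonempty → ConvexIn I J →
      restrictTree (restrictTree T I) J = restrictTree T J :=
  ⟨hT.restrict (subset_univ I) hne, hT.treeRank_restrictTree_le (subset_univ I) hne,
    fun _ hJI _ _ => restrictTree_restrictTree hJI⟩

/-- if `T` is a condensation tree over the linear order `α` and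
`I` is a nonempty convex subset of `α`, then `T|_I` is a condensation tree over
`I`, its rank is at most the rank of `T`, and `(T|_I)|_J = T|_J` for every
nonempty convex subset `J` of `I`. -/
theorem restrict_condensation_tree {α : Type} [LinearOrder α]
    (T : Set (Set α)) (hT : IsCondTreeOn Set.univ T)
    (I : Set α) (hne : I.Nonempty) (hconv : ConvexIn Set.univ I) :
    IsCondTreeOn I (restrictTree T I) ∧
    treeRank I (restrictTree T I) ≤ treeRank Set.univ T ∧
    ∀ J : Set α, J ⊆ I → J.Nonempty → ConvexIn I J →
      restrictTree (restrictTree T I) J = restrictTree T J :=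
  restrict_condensation_tree_general T hT I hne
end
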